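/- The function H = ½(s1² + s2² + 2s3²) + α r1 s3 − ½ α² r3² is a first integral of the transformed system: for every real α, the derivative of H along the vector field X_T vanishes identically on ℝ⁶. -/

import Mathlib

noncomputable section

/-- The transformed system (Kirchhoff's equations in Sokolov's case after a linear
change of variables, β = 0): the polynomial vector field on ℝ⁶ with coordinates
(s1, s2, s3, r1, r2, r3) and real parameter α. -/
noncomputable def XT (α : ℝ) : ℝ × ℝ × ℝ × ℝ × ℝ × ℝ → ℝ × ℝ × ℝ × ℝ × ℝ × ℝ :=
  fun (s1, s2, s3, r1, r2, r3) =>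
    ((α * r1 + s3) * s2 - α ^ 2 * r2 * r3,
     (α * r3 - s1) * (α * r1 + s3),
     -(α * r2 * s3),
     (α * r1 + 2 * s3) * r2 - r3 * s2,
     r3 * s1 - r1 * (α * r1 + 2 * s3),
     r1 * s2 - r2 * s1)

/-- H = ½(s1² + s2² + 2s3²) + α r1 s3 − ½ α² r3². -/
noncomputable def HT (α : ℝ) : ℝ × ℝ × ℝ × ℝ × ℝ × ℝ → ℝ :=
  fun (s1, s2, s3, r1, r2, r3) =>
    (1 / 2) * (s1 ^ 2 + s2 ^ 2 + 2 * s3 ^ 2) + α * r1 * s3 - (1 / 2) * α ^ 2 * r3 ^ 2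

/-- H is a first integral of the transformed system: for every real α, the derivative
of H along the vector field X_T vanishes identically on ℝ⁶. -/
theorem H_first_integral_transformed (α : ℝ) (p : ℝ × ℝ × ℝ × ℝ × ℝ × ℝ) :
    fderiv ℝ (HT α) p (XT α p) = 0 := by
  obtain ⟨s1, s2, s3, r1, r2, r3⟩ := p
  have h1 : HasFDerivAt (fun q : ℝ × ℝ × ℝ × ℝ × ℝ × ℝ => q.1)
      (ContinuousLinearMap.fst ℝ ℝ (ℝ × ℝ × ℝ × ℝ × ℝ)) (s1, s2, s3, r1, r2, r3) :=
    hasFDerivAt_fst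
  have h2 : HasFDerivAt (fun q : ℝ × ℝ × ℝ × ℝ × ℝ × ℝ => q.2.1)
      ((ContinuousLinearMap.fst ℝ ℝ (ℝ × ℝ × ℝ × ℝ)).comp
        (ContinuousLinearMap.snd ℝ ℝ (ℝ × ℝ × ℝ × ℝ × ℝ))) (s1, s2, s3, r1, r2, r3) :=
    hasFDerivAt_fst.comp _ hasFDerivAt_snd
  have h3 : HasFDerivAt (fun q : ℝ × ℝ × ℝ × ℝ × ℝ × ℝ => q.2.2.1)
      ((ContinuousLinearMap.fst ℝ ℝ (ℝ × ℝ × ℝ)).comp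
        ((ContinuousLinearMap.snd ℝ ℝ (ℝ × ℝ × ℝ × ℝ)).comp
          (ContinuousLinearMap.snd ℝ ℝ (ℝ × ℝ × ℝ × ℝ × ℝ)))) (s1, s2, s3, r1, r2, r3) :=
    hasFDerivAt_fst.comp _ (hasFDerivAt_snd.comp _ hasFDerivAt_snd)
  have h4 : HasFDerivAt (fun q : ℝ × ℝ × ℝ × ℝ × ℝ × ℝ => q.2.2.2.1)
      ((ContinuousLinearMap.fst ℝ ℝ (ℝ × ℝ)).comp
        ((ContinuousLinearMap.snd ℝ ℝ (ℝ × ℝ × ℝ)).comp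
          ((ContinuousLinearMap.snd ℝ ℝ (ℝ × ℝ × ℝ × ℝ)).comp
            (ContinuousLinearMap.snd ℝ ℝ (ℝ × ℝ × ℝ × ℝ × ℝ))))) (s1, s2, s3, r1, r2, r3) :=
    hasFDerivAt_fst.comp _ (hasFDerivAt_snd.comp _ (hasFDerivAt_snd.comp _ hasFDerivAt_snd))
  have h6 : HasFDerivAt (fun q : ℝ × ℝ × ℝ × ℝ × ℝ × ℝ => q.2.2.2.2.2)
      ((ContinuousLinearMap.snd ℝ ℝ ℝ).comp
        ((ContinuousLinearMap.snd ℝ ℝ (ℝ × ℝ)).comp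
          ((ContinuousLinearMap.snd ℝ ℝ (ℝ × ℝ × ℝ)).comp
            ((ContinuousLinearMap.snd ℝ ℝ (ℝ × ℝ × ℝ × ℝ)).comp
              (ContinuousLinearMap.snd ℝ ℝ (ℝ × ℝ × ℝ × ℝ × ℝ)))))) (s1, s2, s3, r1, r2, r3) :=
    hasFDerivAt_snd.comp _ (hasFDerivAt_snd.comp _ (hasFDerivAt_snd.comp _ (hasFDerivAt_snd.comp _ hasFDerivAt_snd)))
  have hH :=
    ((((h1.mul h1).add ((h2.mul h2).add ((h3.mul h3).const_mul 2))).const_mul (1/2)).add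
      (((h4.const_mul α).mul h3))).sub ((h6.mul h6).const_mul ((1/2) * α^2))
  have hHeq : (fun q : ℝ × ℝ × ℝ × ℝ × ℝ × ℝ =>
      (1/2) * (q.1 * q.1 + (q.2.1 * q.2.1 + 2 * (q.2.2.1 * q.2.2.1))) + (α * q.2.2.2.1) * q.2.2.1
        - (1/2) * α^2 * (q.2.2.2.2.2 * q.2.2.2.2.2)) = HT α := by
    funext ⟨a, b, c, d, e, f⟩
    simp [HT]; ring
  replace hH : HasFDerivAt (fun q : ℝ × ℝ × ℝ × ℝ × ℝ × ℝ =>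
      (1/2) * (q.1 * q.1 + (q.2.1 * q.2.1 + 2 * (q.2.2.1 * q.2.2.1))) + (α * q.2.2.2.1) * q.2.2.1
        - (1/2) * α^2 * (q.2.2.2.2.2 * q.2.2.2.2.2)) _ (s1, s2, s3, r1, r2, r3) := hH
  rw [hHeq] at hH
  rw [hH.fderiv]
  simp [XT]
  ring
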